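/- (Counter doubling.) Let (V, s₀, s₁) be a switch graph with distinct vertices C, A, B such that s₀(A) = s₁(A) = C. Suppose the train run from C visits A exactly T times before first reaching B, and that at the first step N at which the train's position is B, every switch except possibly the one at A is 0. Form a new switch graph V' = V ∪ {F} with F a fresh vertex, redefining s₀(B) = C and s₁(B) = F, setting s₀(F) = s₁(F) = F, and leaving all other edges unchanged. Then in V' the train run from C visits A exactly 2T times before first reaching F, and at the first step at which its position is F, every switch except possibly the one at A is 0. -/
import Mathlib


open scoped Classical

variable {V : Type*}

/-- One step of the train: move along the edge given by the current switch state
and toggle the switch at the current vertex. -/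
def step [DecidableEq V] (s0 s1 : V → V) (c : V × (V → Bool)) : V × (V → Bool) :=
  (if c.2 c.1 then s1 c.1 else s0 c.1, Function.update c.2 c.1 (!c.2 c.1))

/-- The train run from `u`: iterate the step map starting with all switches `0`. -/
def run [DecidableEq V] (s0 s1 : V → V) (u : V) (k : ℕ) : V × (V → Bool) :=
  (step s0 s1)^[k] (u, fun _ => false)

/-- The train run from `u` visits `A` exactly `T` times before first reaching `B`. -/
def VisitsExactly [DecidableEq V] (s0 s1 : V → V) (u A B : V) (T : ℕ) : Prop :=
  ∃ N, (run s0 s1 u N).1 = B ∧ (∀ k < N, (run s0 s1 u k).1 ≠ B) ∧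
    ((Finset.range N).filter (fun k => (run s0 s1 u k).1 = A)).card = T

/-- Extend a switch graph by a fresh vertex `none` (the new absorbing vertex `F`),
redirecting the given out-edge of `B` to `tgt` and keeping all other edges. -/
def extendTo [DecidableEq V] (f : V → V) (B : V) (tgt : Option V) :
    Option V → Option V :=
  fun x => match x with
  | none => none
  | some v => if v = B then tgt else some (f v)

/- ## Auxiliary material -/

lemma run_succ [DecidableEq V] (s0 s1 : V → V) (u : V) (k : ℕ) :
    run s0 s1 u (k + 1) = step s0 s1 (run s0 s1 u k) :=
  Function.iterate_succ_apply' _ _ _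

/-- Lift a switch assignment on `V` to `Option V` (phase 1). -/
def lift1 (σ : V → Bool) : Option V → Bool := fun x =>
  match x with
  | none => false
  | some v => σ v

/-- Lift a switch assignment on `V` to `Option V`, flipping `B` and offsetting `A`
by `t` (phase 2). -/
def lift2 [DecidableEq V] (A B : V) (t : Bool) (σ : V → Bool) : Option V → Bool := fun x =>
  match x with
  | none => false
  | some w => if w = B then !(σ w) else if w = A then xor t (σ w) else σ w

lemma lift1_false : lift1 (fun _ : V => false) = fun _ => false := by
  funext x; cases x <;> rfl

lemma step_lift1 [DecidableEq V] (s0 s1 : V → V) (B : V) (tgt : Option V)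
    (v : V) (σ : V → Bool) (hv : v ≠ B) :
    step (extendTo s0 B tgt) (extendTo s1 B none) (some v, lift1 σ)
      = (some (step s0 s1 (v, σ)).1, lift1 (step s0 s1 (v, σ)).2) := by
  have hupd : Function.update (lift1 σ) (some v) (!(lift1 σ (some v)))
      = lift1 (Function.update σ v (!(σ v))) := by
    funext x
    cases x with
    | none => rw [Function.update_of_ne (by simp)]; rfl
    | some w =>
      by_cases h : w = v
      · subst h; simp [lift1]
      · rw [Function.update_of_ne (by simpa using h)]
        show lift1 σ (some w) = lift1 _ (some w)
        simp [lift1, Function.update_of_ne h]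
  show (_, _) = (_, _)
  refine Prod.ext ?_ ?_
  · show (if lift1 σ (some v) then extendTo s1 B none (some v) else extendTo s0 B tgt (some v))
      = some (if σ v then s1 v else s0 v)
    have h1 : extendTo s1 B none (some v) = some (s1 v) := by simp [extendTo, hv]
    have h0 : extendTo s0 B tgt (some v) = some (s0 v) := by simp [extendTo, hv]
    cases h : σ v <;> simp [lift1, h, h0, h1]
  · exact hupd

lemma step_lift2 [DecidableEq V] (s0 s1 : V → V) (A B C : V) (tgt : Option V)
    (hA0 : s0 A = C) (hA1 : s1 A = C) (t : Bool)
    (v : V) (σ : V → Bool) (hv : v ≠ B) :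
    step (extendTo s0 B tgt) (extendTo s1 B none) (some v, lift2 A B t σ)
      = (some (step s0 s1 (v, σ)).1, lift2 A B t (step s0 s1 (v, σ)).2) := by
  have hupd : Function.update (lift2 A B t σ) (some v) (!(lift2 A B t σ (some v)))
      = lift2 A B t (Function.update σ v (!(σ v))) := by
    funext x
    cases x with
    | none => rw [Function.update_of_ne (by simp)]; rfl
    | some w =>
      by_cases h : w = v
      · rw [h, Function.update_self]
        show (!(lift2 A B t σ (some v))) = lift2 A B t (Function.update σ v (!(σ v))) (some v)
        by_cases hA : v = A
        · have hABne : ¬(A = B) := fun hab => hv (hA.trans hab)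
          simp only [lift2, if_neg hv, hA, if_pos rfl, if_neg hABne, Function.update_self]
          cases t <;> cases σ A <;> rfl
        · simp only [lift2, if_neg hv, if_neg hA, Function.update_self]
      · rw [Function.update_of_ne (by simpa using h)]
        show lift2 A B t σ (some w) = lift2 A B t _ (some w)
        simp only [lift2, Function.update_of_ne h]
  show (_, _) = (_, _)
  refine Prod.ext ?_ ?_
  · show (if lift2 A B t σ (some v) then extendTo s1 B none (some v)
        else extendTo s0 B tgt (some v)) = some (if σ v then s1 v else s0 v)
    have h1 : extendTo s1 B none (some v) = some (s1 v) := by simp [extendTo, hv]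
    have h0 : extendTo s0 B tgt (some v) = some (s0 v) := by simp [extendTo, hv]
    by_cases hA : v = A
    · rw [h0, h1, hA, hA0, hA1]
      simp only [ite_self]
    · have hl : lift2 A B t σ (some v) = σ v := by simp [lift2, hv, hA]
      rw [hl]
      cases h : σ v <;> simp [h, h0, h1]
  · exact hupd

lemma phase1 [DecidableEq V] (s0 s1 : V → V) (C B : V) (tgt : Option V) (N : ℕ)
    (hNk : ∀ k < N, (run s0 s1 C k).1 ≠ B) :
    ∀ k ≤ N, run (extendTo s0 B tgt) (extendTo s1 B none) (some C) k
      = (some (run s0 s1 C k).1, lift1 (run s0 s1 C k).2) := by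
  intro k hk
  induction k with
  | zero =>
    show (some C, fun _ => false) = _
    rw [← lift1_false]; rfl
  | succ k ih =>
    have hk' : k ≤ N := Nat.le_of_succ_le hk
    rw [run_succ, run_succ, ih hk']
    exact step_lift1 s0 s1 B tgt _ _ (hNk k (Nat.lt_of_succ_le hk))

lemma phase2 [DecidableEq V] (s0 s1 : V → V) (A B C : V) (tgt : Option V)
    (hA0 : s0 A = C) (hA1 : s1 A = C) (t : Bool) (N : ℕ)
    (hNk : ∀ k < N, (run s0 s1 C k).1 ≠ B) :
    ∀ k ≤ N, (step (extendTo s0 B tgt) (extendTo s1 B none))^[k]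
        (some C, lift2 A B t (fun _ => false))
      = (some (run s0 s1 C k).1, lift2 A B t (run s0 s1 C k).2) := by
  intro k hk
  induction k with
  | zero => rfl
  | succ k ih =>
    have hk' : k ≤ N := Nat.le_of_succ_le hk
    rw [Function.iterate_succ_apply', run_succ, ih hk']
    exact step_lift2 s0 s1 A B C tgt hA0 hA1 t _ _ (hNk k (Nat.lt_of_succ_le hk))

lemma card_filter_range_add (p : ℕ → Prop) [DecidablePred p] (a b : ℕ) :
    ((Finset.range (a + b)).filter p).card
      = ((Finset.range a).filter p).card
        + ((Finset.range b).filter (fun k => p (a + k))).card := by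
  induction b with
  | zero => simp
  | succ b ih =>
    rw [← Nat.add_assoc, Finset.range_add_one, Finset.range_add_one,
      Finset.filter_insert, Finset.filter_insert]
    by_cases h : p (a + b)
    · rw [if_pos h, if_pos h, Finset.card_insert_of_notMem (by simp),
        Finset.card_insert_of_notMem (by simp), ih]
      omega
    · rw [if_neg h, if_neg h, ih]

/-- Counter doubling: if the train from `C` visits `A` exactly `T` times before first
reaching `B`, and at that point all switches except possibly `A`'s are `0`, then after
redirecting `s₀(B) = C`, `s₁(B) = F` for a fresh absorbing vertex `F`, the train from `C`
visits `A` exactly `2T` times before first reaching `F`, and again all switches except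
possibly `A`'s are `0` at that point. -/
theorem counter_doubling [DecidableEq V] (s0 s1 : V → V) (C A B : V)
    (hCA : C ≠ A) (hCB : C ≠ B) (hAB : A ≠ B)
    (hA0 : s0 A = C) (hA1 : s1 A = C) (T : ℕ)
    (hvis : VisitsExactly s0 s1 C A B T)
    (hclean : ∀ N, (run s0 s1 C N).1 = B → (∀ k < N, (run s0 s1 C k).1 ≠ B) →
      ∀ w, w ≠ A → (run s0 s1 C N).2 w = false) :
    VisitsExactly (extendTo s0 B (some C)) (extendTo s1 B none)
      (some C) (some A) none (2 * T) ∧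
    ∀ N, (run (extendTo s0 B (some C)) (extendTo s1 B none) (some C) N).1 = none →
      (∀ k < N,
        (run (extendTo s0 B (some C)) (extendTo s1 B none) (some C) k).1 ≠ none) →
      ∀ w, w ≠ some A →
        (run (extendTo s0 B (some C)) (extendTo s1 B none) (some C) N).2 w = false := by
  obtain ⟨N, hN, hNk, hcard⟩ := hvis
  set s0' := extendTo s0 B (some C) with hs0'
  set s1' := extendTo s1 B none with hs1'
  set σN := (run s0 s1 C N).2 with hσN
  set t := σN A with ht
  have hcleanN : ∀ w, w ≠ A → σN w = false := hclean N hN hNk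
  have hB0 : σN B = false := hcleanN B (Ne.symm hAB)
  have h1 := phase1 s0 s1 C B (some C) N hNk
  -- the state at time N+1 in the extended graph
  have hmid : run s0' s1' (some C) (N + 1) = (some C, lift2 A B t (fun _ => false)) := by
    rw [run_succ, h1 N le_rfl, hN]
    have hread : lift1 σN (some B) = false := hB0
    refine Prod.ext ?_ ?_
    · show (if lift1 σN (some B) then s1' (some B) else s0' (some B)) = some C
      rw [hread]
      simp [hs0', extendTo]
    · show Function.update (lift1 σN) (some B) (!(lift1 σN (some B))) = _
      funext x
      cases x with
      | none => rw [Function.update_of_ne (by simp)]; rfl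
      | some w =>
        by_cases hwB : w = B
        · rw [hwB, Function.update_self, hread]
          show true = lift2 A B t (fun _ => false) (some B)
          simp [lift2]
        · rw [Function.update_of_ne (by simpa using hwB)]
          show lift1 σN (some w) = lift2 A B t (fun _ => false) (some w)
          by_cases hwA : w = A
          · rw [hwA]
            show σN A = lift2 A B t (fun _ => false) (some A)
            simp [lift2, hAB, ht]
          · simp [lift1, lift2, hwB, hwA, hcleanN w hwA]
  have h2 : ∀ k ≤ N, run s0' s1' (some C) (k + (N + 1))
      = (some (run s0 s1 C k).1, lift2 A B t (run s0 s1 C k).2) := by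
    intro k hk
    have : run s0' s1' (some C) (k + (N + 1))
        = (step s0' s1')^[k] (run s0' s1' (some C) (N + 1)) := by
      rw [run, Function.iterate_add_apply]; rfl
    rw [this, hmid]
    exact phase2 s0 s1 A B C (some C) hA0 hA1 t N hNk k hk
  -- the final step
  have hfin : run s0' s1' (some C) (N + (N + 1) + 1)
      = (none, Function.update (lift2 A B t σN) (some B) false) := by
    rw [run_succ, h2 N le_rfl, hN]
    have hread : lift2 A B t σN (some B) = true := by
      simp [lift2, hB0]
    refine Prod.ext ?_ ?_
    · show (if lift2 A B t σN (some B) then s1' (some B) else s0' (some B)) = none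
      rw [hread]
      simp [hs1', extendTo]
    · show Function.update (lift2 A B t σN) (some B) (!(lift2 A B t σN (some B))) = _
      rw [hread]
      rfl
  have hM : N + (N + 1) + 1 = 2 * N + 2 := by omega
  rw [hM] at hfin
  -- positions before 2N+2 are not `none`
  have hne : ∀ k < 2 * N + 2, (run s0' s1' (some C) k).1 ≠ none := by
    intro k hk
    rcases le_or_gt k N with h | h
    · rw [h1 k h]; simp
    · have hk' : k - (N + 1) ≤ N := by omega
      have : k = (k - (N + 1)) + (N + 1) := by omega
      rw [this, h2 _ hk']
      simp
  constructor
  · refine ⟨2 * N + 2, by rw [hfin], hne, ?_⟩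
    have hsplit : 2 * N + 2 = (N + 1) + (N + 1) := by omega
    rw [hsplit, card_filter_range_add]
    have e1 : ((Finset.range (N + 1)).filter
        (fun k => (run s0' s1' (some C) k).1 = some A)).card = T := by
      have hfc : (Finset.range (N + 1)).filter
            (fun k => (run s0' s1' (some C) k).1 = some A)
          = (Finset.range (N + 1)).filter (fun k => (run s0 s1 C k).1 = A) := by
        apply Finset.filter_congr
        intro k hk
        rw [h1 k (Nat.lt_succ_iff.mp (Finset.mem_range.mp hk))]
        simp
      rw [hfc, Finset.range_add_one, Finset.filter_insert,
        if_neg (show ¬(run s0 s1 C N).1 = A by rw [hN]; exact Ne.symm hAB), hcard]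
    have e2 : ((Finset.range (N + 1)).filter
        (fun k => (run s0' s1' (some C) ((N + 1) + k)).1 = some A)).card = T := by
      have hfc : (Finset.range (N + 1)).filter
            (fun k => (run s0' s1' (some C) ((N + 1) + k)).1 = some A)
          = (Finset.range (N + 1)).filter (fun k => (run s0 s1 C k).1 = A) := by
        apply Finset.filter_congr
        intro k hk
        rw [Nat.add_comm (N + 1) k, h2 k (Nat.lt_succ_iff.mp (Finset.mem_range.mp hk))]
        simp
      rw [hfc, Finset.range_add_one, Finset.filter_insert,
        if_neg (show ¬(run s0 s1 C N).1 = A by rw [hN]; exact Ne.symm hAB), hcard]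
    rw [e1, e2]; omega
  · intro M hMnone hMfirst w hw
    have hMeq : M = 2 * N + 2 := by
      rcases lt_trichotomy M (2 * N + 2) with h | h | h
      · exact absurd hMnone (hne M h)
      · exact h
      · exact absurd (by rw [hfin]) (hMfirst (2 * N + 2) h)
    subst hMeq
    rw [hfin]
    show Function.update (lift2 A B t σN) (some B) false w = false
    cases w with
    | none => rw [Function.update_of_ne (by simp)]; rfl
    | some u =>
      by_cases hu : u = B
      · subst hu; rw [Function.update_self]
      · rw [Function.update_of_ne (by simpa using hu)]
        have huA : u ≠ A := fun h => hw (by rw [h])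
        show lift2 A B t σN (some u) = false
        simp [lift2, hu, huA, hcleanN u huA]
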